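/- (The support of the density only expands.) Let ρⁿ ∈ X be nonnegative satisfying (good_data), and let (ρⁿ⁺¹, μⁿ⁺¹, p) be an optimal step from ρⁿ. Then the set {x ∈ Ω : ρⁿ(x) > 0 and ρⁿ⁺¹(x) = 0} has Lebesgue measure zero; that is, up to a null set, {ρⁿ > 0} ⊂ {ρⁿ⁺¹ > 0}. -/

import Mathlib

open MeasureTheory Filter
open scoped ENNReal NNReal Topology

noncomputable section

/-- Euclidean space `ℝ^d`. -/
abbrev Ed (d : ℕ) := EuclideanSpace ℝ (Fin d)

variable {d : ℕ}

/-- The quadratic transport cost `|x-y|²/(2τ)`. -/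
def cost (τ : ℝ) (x y : Ed d) : ℝ := ‖x - y‖ ^ 2 / (2 * τ)

/-- The `c`-transform `p^c(y) = inf_{x ∈ Ω} (p(x) + |x-y|²/(2τ))`. -/
def ctrans (τ : ℝ) (Ω : Set (Ed d)) (p : Ed d → ℝ) (y : Ed d) : ℝ :=
  ⨅ x : Ω, (p x.1 + cost τ x.1 y)

/-- The conjugate `c`-transform `q^{c̄}(x) = sup_{y ∈ Ω} (q(y) - |x-y|²/(2τ))`. -/
def cbar (τ : ℝ) (Ω : Set (Ed d)) (q : Ed d → ℝ) (x : Ed d) : ℝ :=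
  ⨆ y : Ω, (q y.1 - cost τ x y.1)

/-- `p` is `c`-concave on `Ω` if `p^{cc̄} = p` on `Ω`. -/
def CConcave (τ : ℝ) (Ω : Set (Ed d)) (p : Ed d → ℝ) : Prop :=
  ∀ x ∈ Ω, cbar τ Ω (ctrans τ Ω p) x = p x

/-- The measure with density `ρ` (positive part) with respect to Lebesgue measure on `Ω`. -/
def dmeas (Ω : Set (Ed d)) (ρ : Ed d → ℝ) : Measure (Ed d) :=
  (volume.restrict Ω).withDensity (fun x => ENNReal.ofReal (ρ x))

/-- `π` is a coupling (transport plan) between `μ` and `ν`. -/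
def IsCoupling (μ ν : Measure (Ed d)) (π : Measure (Ed d × Ed d)) : Prop :=
  π.map Prod.fst = μ ∧ π.map Prod.snd = ν

/-- The squared 2-Wasserstein distance; `+∞` (empty infimum) when no coupling exists,
in particular when the total masses differ. -/
def W2sq (μ ν : Measure (Ed d)) : ℝ≥0∞ :=
  ⨅ π ∈ {π : Measure (Ed d × Ed d) | IsCoupling μ ν π},
    ∫⁻ z, ENNReal.ofReal (‖z.1 - z.2‖ ^ 2) ∂π

/-- Internal energy `E(ρ) = ∫_Ω s(ρ)`. -/
def energy (s : ℝ → ℝ≥0∞) (Ω : Set (Ed d)) (ρ : Ed d → ℝ) : ℝ≥0∞ :=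
  ∫⁻ x in Ω, s (ρ x)

/-- The set `X = {ρ ∈ L¹(Ω) : E(ρ) < ∞}`. -/
def memX (s : ℝ → ℝ≥0∞) (Ω : Set (Ed d)) (ρ : Ed d → ℝ) : Prop :=
  IntegrableOn ρ Ω volume ∧ energy s Ω ρ ≠ ⊤

/-- The Legendre transform `s*(p) = sup_y (p·y - s(y))` (a real number by superlinearity). -/
def sstar (s : ℝ → ℝ≥0∞) (p : ℝ) : ℝ :=
  sSup ((fun y => p * y - (s y).toReal) '' {y : ℝ | s y ≠ ⊤})

/-- The dual set `X* = {p measurable : E*(p) < ∞}`. -/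
def memXstar (s : ℝ → ℝ≥0∞) (Ω : Set (Ed d)) (p : Ed d → ℝ) : Prop :=
  Measurable p ∧ IntegrableOn (fun x => sstar s (p x)) Ω volume

/-- The subdifferential `∂s*(b)` of the convex function `s*`. -/
def subStar (s : ℝ → ℝ≥0∞) (b : ℝ) : Set ℝ :=
  {z : ℝ | ∀ w : ℝ, sstar s b + z * (w - b) ≤ sstar s w}

/-- Membership `p ∈ ∂s(z)`, characterized by the Legendre duality relation
`p·z = s(z) + s*(p)` (with `s(z)` finite). -/
def inSubdiff (s : ℝ → ℝ≥0∞) (z p : ℝ) : Prop :=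
  s z ≠ ⊤ ∧ p * z = (s z).toReal + sstar s p

/-- The subdifferential `∂s(z)` of the convex function `s`. -/
def subE (s : ℝ → ℝ≥0∞) (z : ℝ) : Set ℝ := {p : ℝ | inSubdiff s z p}

/-- Standing assumptions on the energy density `s`: proper, convex, lower semicontinuous,
superlinear, `+∞` on negatives, `s(0) = 0`, increasing on `[0,∞)`, zero slope at `0⁺`. -/
structure EnergyDensity (s : ℝ → ℝ≥0∞) : Prop where
  proper : ∃ z : ℝ, s z ≠ ⊤
  convex : ∀ a b : ℝ, ∀ t ∈ Set.Icc (0:ℝ) 1,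
    s (t * a + (1 - t) * b) ≤ ENNReal.ofReal t * s a + ENNReal.ofReal (1 - t) * s b
  lsc : LowerSemicontinuous s
  superlinear : Tendsto (fun z : ℝ => s z / ENNReal.ofReal z) atTop (𝓝 ⊤)
  eq_top_of_neg : ∀ z : ℝ, z < 0 → s z = ⊤
  zero : s 0 = 0
  mono : MonotoneOn s (Set.Ici (0:ℝ))
  slope_zero : Tendsto (fun z : ℝ => (s z).toReal / z) (𝓝[>] (0:ℝ)) (𝓝 0)

/-- Standing assumptions (G1)-(G4) on a growth function `G`. -/
structure GrowthFun (d : ℕ) (b₀ b₁ B : ℝ) (G : ℝ → Ed d → ℝ) : Prop where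
  lipschitz : ∃ L : ℝ≥0, LipschitzWith L (Function.uncurry G)
  anti : ∀ x : Ed d, Antitone (fun z => G z x)
  pos_at_zero : ∀ x : Ed d, 0 < G 0 x
  b₀_nonneg : 0 ≤ b₀
  b₀_le_b₁ : b₀ ≤ b₁
  exists_root : ∀ x : Ed d, ∃ b ∈ Set.Icc b₀ b₁, G b x = 0
  bound : ∀ z : ℝ, 0 ≤ z → ∀ x : Ed d, |G z x| ≤ B

/-- The antiderivative `Ḡ(z,x) = ∫₀^z G(ζ,x) dζ`. -/
def Gbar (G : ℝ → Ed d → ℝ) (z : ℝ) (x : Ed d) : ℝ := ∫ ζ in (0:ℝ)..z, G ζ x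

/-- The convex dual growth penalty `f(w,x) = sup_z (Ḡ(z,x) - z·w)`; it is nonnegative
(take `z = 0`), valued in `[0,∞]`. -/
def fdual (G : ℝ → Ed d → ℝ) (w : ℝ) (x : Ed d) : ℝ≥0∞ :=
  ⨆ z : ℝ, ENNReal.ofReal (Gbar G z x - z * w)

/-- `μ ∈ AC(ρ)`: `μ ∈ L¹(Ω)` is absolutely continuous with respect to `ρ`. -/
def ACwrt (Ω : Set (Ed d)) (ρ μ : Ed d → ℝ) : Prop :=
  IntegrableOn μ Ω volume ∧ ∀ᵐ x ∂(volume.restrict Ω), ρ x = 0 → μ x = 0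

/-- The primal one-step functional
`J(ρ,μ,ρⁿ) = E(ρ) + τ ∫_Ω ρⁿ f(μ/ρⁿ, x) dx + (1/(2τ)) W₂²(ρ, ρⁿ + τμ)`. -/
def Jfun (τ : ℝ) (Ω : Set (Ed d)) (s : ℝ → ℝ≥0∞) (G : ℝ → Ed d → ℝ)
    (ρ μ ρn : Ed d → ℝ) : ℝ≥0∞ :=
  energy s Ω ρ
    + ENNReal.ofReal τ * ∫⁻ x in Ω, ENNReal.ofReal (ρn x) * fdual G (μ x / ρn x) x
    + (ENNReal.ofReal (2 * τ))⁻¹ * W2sq (dmeas Ω ρ) (dmeas Ω (fun x => ρn x + τ * μ x))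

/-- The dual one-step functional
`J*(p,ρⁿ) = ∫_Ω ρⁿ (p^c + τ Ḡ(p^c, x)) dx - ∫_Ω s*(p) dx`. -/
def Jstar (τ : ℝ) (Ω : Set (Ed d)) (s : ℝ → ℝ≥0∞) (G : ℝ → Ed d → ℝ)
    (p ρn : Ed d → ℝ) : ℝ :=
  (∫ x in Ω, ρn x * (ctrans τ Ω p x + τ * Gbar G (ctrans τ Ω p x) x))
    - ∫ x in Ω, sstar s (p x)

/-- The condition (good_data):
`limsup_{b→-∞} sup ∂s*(b) = 0 < (1/|Ω|)∫_Ω ρ < liminf_{b→+∞} inf ∂s*(b)`. -/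
def GoodData (s : ℝ → ℝ≥0∞) (Ω : Set (Ed d)) (ρ : Ed d → ℝ) : Prop :=
  limsup (fun b : ℝ => ((sSup (subStar s b) : ℝ) : EReal)) atBot = (0 : EReal) ∧
  0 < (∫ x in Ω, ρ x) / (volume Ω).toReal ∧
  (((∫ x in Ω, ρ x) / (volume Ω).toReal : ℝ) : EReal)
    < liminf (fun b : ℝ => ((sInf (subStar s b) : ℝ) : EReal)) atTop

/-- The `L^∞(Ω)`-norm of a (nonnegative) density. -/
def supNorm (Ω : Set (Ed d)) (ρ : Ed d → ℝ) : ℝ :=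
  (essSup (fun x => ENNReal.ofReal (ρ x)) (volume.restrict Ω)).toReal

/-- The condition (good_data_0): `ρ ∈ X` is compactly supported and `inf ∂s(‖ρ‖_∞) < ∞`
(i.e. `∂s(‖ρ‖_∞)` is nonempty). -/
def GoodData0 (s : ℝ → ℝ≥0∞) (Ω : Set (Ed d)) (ρ : Ed d → ℝ) : Prop :=
  memX s Ω ρ ∧ HasCompactSupport ρ ∧ (subE s (supNorm Ω ρ)).Nonempty

/-- The optimality conditions satisfied by one step of the scheme: `p` is `c`-concave;
`p ∈ ∂s(ρⁿ⁺¹)` a.e.; `μⁿ⁺¹ = ρⁿ G(p^c, ·)` a.e.; and `ρⁿ⁺¹` is the pushforward of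
`ρⁿ + τ μⁿ⁺¹` under the optimal map `T_p(y) = y - τ∇p^c(y)` whose a.e. inverse is
`x ↦ x + τ∇p(x)`. -/
structure OptimalStep (τ : ℝ) (Ω : Set (Ed d)) (s : ℝ → ℝ≥0∞) (G : ℝ → Ed d → ℝ)
    (ρn ρn1 μn1 p : Ed d → ℝ) : Prop where
  cconcave : CConcave τ Ω p
  subdiff : ∀ᵐ x ∂(volume.restrict Ω), inSubdiff s (ρn1 x) (p x)
  growth : ∀ᵐ x ∂(volume.restrict Ω), μn1 x = ρn x * G (ctrans τ Ω p x) x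
  pushforward : ∃ T : Ed d → Ed d, Measurable T ∧
    (∀ᵐ y ∂(volume.restrict Ω), T y = y - τ • gradient (ctrans τ Ω p) y) ∧
    Measure.map T (dmeas Ω (fun x => ρn x + τ * μn1 x)) = dmeas Ω ρn1 ∧
    (∀ᵐ x ∂(dmeas Ω ρn1), T (x + τ • gradient p x) = x)

/-- The incompressible energy density `s_∞`. -/
def sInfty : ℝ → ℝ≥0∞ := fun z => if z ∈ Set.Icc (0:ℝ) 1 then 0 else ⊤

/-- (good_data) for the incompressible energy: `0 < (1/|Ω|)∫_Ω ρ < 1`. -/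
def GoodDataInf (Ω : Set (Ed d)) (ρ : Ed d → ℝ) : Prop :=
  0 < (∫ x in Ω, ρ x) / (volume Ω).toReal ∧ (∫ x in Ω, ρ x) / (volume Ω).toReal < 1

/-- The discrete JKO-type scheme: `ρ⁰ = ρ₀`; `(ρⁿ⁺¹, μⁿ⁺¹)` minimizes `J(·,·,ρⁿ)` over
`X × AC(ρⁿ)`, and `pₙ₊₁` is the minimal `c`-concave maximizer of the dual `J*(·,ρⁿ)`. -/
structure IsScheme (τ : ℝ) (Ω : Set (Ed d)) (s : ℝ → ℝ≥0∞) (G : ℝ → Ed d → ℝ)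
    (ρ₀ : Ed d → ℝ) (ρ μ p : ℕ → Ed d → ℝ) : Prop where
  init : ρ 0 = ρ₀
  mem : ∀ n : ℕ, memX s Ω (ρ (n+1))
  ac : ∀ n : ℕ, ACwrt Ω (ρ n) (μ (n+1))
  isMin : ∀ n : ℕ, ∀ ρ' μ' : Ed d → ℝ, memX s Ω ρ' → ACwrt Ω (ρ n) μ' →
    Jfun τ Ω s G (ρ (n+1)) (μ (n+1)) (ρ n) ≤ Jfun τ Ω s G ρ' μ' (ρ n)
  pXstar : ∀ n : ℕ, memXstar s Ω (p (n+1))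
  pCConcave : ∀ n : ℕ, CConcave τ Ω (p (n+1))
  pIsMax : ∀ n : ℕ, ∀ q : Ed d → ℝ, memXstar s Ω q → CConcave τ Ω q →
    Jstar τ Ω s G q (ρ n) ≤ Jstar τ Ω s G (p (n+1)) (ρ n)
  pIsMinimal : ∀ n : ℕ, ∀ q : Ed d → ℝ, memXstar s Ω q → CConcave τ Ω q →
    (∀ r : Ed d → ℝ, memXstar s Ω r → CConcave τ Ω r →
      Jstar τ Ω s G r (ρ n) ≤ Jstar τ Ω s G q (ρ n)) →
    ∀ x ∈ Ω, p (n+1) x ≤ q x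

/-- Extension of a function by zero outside `Ω`. -/
def zext (Ω : Set (Ed d)) (ρ : Ed d → ℝ) : Ed d → ℝ := Set.indicator Ω ρ

/-- The piecewise-constant-in-time interpolation of a sequence of functions, as a function
on space-time `ℝ^d × ℝ`, extended by zero outside `Ω`. -/
def interpQ (Ω : Set (Ed d)) (τ : ℝ) (F : ℕ → Ed d → ℝ) : Ed d × ℝ → ℝ :=
  fun z => Set.indicator Ω (F (⌊z.2 / τ⌋₊ + 1)) z.1

/-- The space-time cylinder `Q = ℝ^d × [0,T]`. -/
def QT (d : ℕ) (T : ℝ) : Set (Ed d × ℝ) := Set.univ ×ˢ Set.Icc (0:ℝ) T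

/-- The Laplacian of `f : ℝ^d → ℝ`. -/
def lapl (f : Ed d → ℝ) (x : Ed d) : ℝ :=
  ∑ i : Fin d, iteratedFDeriv ℝ 2 f x ![EuclideanSpace.single i 1, EuclideanSpace.single i 1]

/-- Very weak solution of `ρ_t - ∇·(ρ∇p) = ρ G(p,x)`, `p ∈ ∂s(ρ)` on `ℝ^d × [0,T]` with
initial data `ρ₀`: both `ρ, p` bounded, `ρ ≥ 0` compactly supported in space,
`s*(p) ∈ L²(Q)`, the duality relation `ρp = s(ρ) + s*(p)` holds a.e., and the very weak
formulation holds for all smooth test functions and a.e. `t₀ ∈ [0,T]`. -/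
def IsVeryWeakSol {d : ℕ} (T : ℝ) (s : ℝ → ℝ≥0∞) (G : ℝ → Ed d → ℝ)
    (ρ₀ : Ed d → ℝ) (ρ p : Ed d × ℝ → ℝ) : Prop :=
  (∃ C : ℝ, ∀ᵐ z ∂(volume.restrict (QT d T)), |ρ z| ≤ C ∧ |p z| ≤ C) ∧
  (∀ᵐ z ∂(volume.restrict (QT d T)), 0 ≤ ρ z) ∧
  (∃ R : ℝ, ∀ᵐ z ∂(volume.restrict (QT d T)), ρ z ≠ 0 → ‖z.1‖ ≤ R) ∧
  MemLp (fun z => sstar s (p z)) 2 (volume.restrict (QT d T)) ∧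
  (∀ᵐ z ∂(volume.restrict (QT d T)), inSubdiff s (ρ z) (p z)) ∧
  ∀ φ : Ed d × ℝ → ℝ, ContDiff ℝ (⊤ : ℕ∞) φ →
    ∀ᵐ t₀ ∂(volume.restrict (Set.Icc (0:ℝ) T)),
      (∫ z in (Set.univ ×ˢ Set.Ioc (0:ℝ) t₀ : Set (Ed d × ℝ)),
          (ρ z * deriv (fun u => φ (z.1, u)) z.2
            + sstar s (p z) * lapl (fun x => φ (x, z.2)) z.1
            + G (p z) z.1 * ρ z * φ z))
        = (∫ x : Ed d, ρ (x, t₀) * φ (x, t₀)) - ∫ x : Ed d, ρ₀ x * φ (x, 0)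

end

noncomputable section AuxLemmas

open scoped RealInnerProductSpace

/-- Real `iSup` as negated `iInf`. -/
lemma real_iSup_eq_neg_iInf {ι : Sort*} (f : ι → ℝ) : (⨆ i, f i) = -(⨅ i, -f i) := by
  have h2 : Set.range (fun i => -f i) = -Set.range f := by
    ext x
    simp only [Set.mem_range, Set.mem_neg]
    constructor
    · rintro ⟨i, rfl⟩; exact ⟨i, by simp⟩
    · rintro ⟨i, hi⟩; exact ⟨i, by rw [hi, neg_neg]⟩
  rw [iInf, h2, Real.sInf_def, neg_neg, neg_neg]
  rfl

/-- The `c`-transform with a bounded-below potential on a bounded set is continuous. -/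
lemma continuous_ctrans {d : ℕ} (τ : ℝ) (hτ : 0 < τ) (S : Set (Ed d)) (hne : S.Nonempty)
    (R : ℝ) (hR : ∀ x ∈ S, ‖x‖ ≤ R) (f : Ed d → ℝ) (m : ℝ) (hm : ∀ x ∈ S, m ≤ f x) :
    Continuous (ctrans τ S f) := by
  haveI : Nonempty S := hne.to_subtype
  have hcost0 : ∀ (a b : Ed d), 0 ≤ cost τ a b := by
    intro a b; unfold cost; positivity
  have hbdd : ∀ y, BddBelow (Set.range fun x : S => f x.1 + cost τ x.1 y) := by
    intro y
    refine ⟨m, ?_⟩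
    rintro v ⟨x, rfl⟩
    have h1 := hm x.1 x.2
    have h2 := hcost0 x.1 y
    show m ≤ f x.1 + cost τ x.1 y
    linarith
  have hR0 : 0 ≤ R := le_trans (norm_nonneg _) (hR hne.some hne.some_mem)
  rw [continuous_iff_continuousAt]
  intro y₀
  set C : ℝ := R + ‖y₀‖ + 1 with hC
  have hC0 : 0 < C := by have := norm_nonneg y₀; simp only [hC]; linarith
  have hKpos : 0 < C / τ := by positivity
  -- cost comparison on the ball
  have hcost : ∀ x ∈ S, ∀ y ∈ Metric.ball y₀ 1, ∀ y' ∈ Metric.ball y₀ 1,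
      cost τ x y ≤ cost τ x y' + (C / τ) * dist y y' := by
    intro x hx y hy y' hy'
    have hyb : ‖y‖ ≤ ‖y₀‖ + 1 := by
      have h1 : dist y y₀ < 1 := Metric.mem_ball.mp hy
      have h2 : ‖y‖ - ‖y₀‖ ≤ ‖y - y₀‖ := norm_sub_norm_le y y₀
      rw [dist_eq_norm] at h1; linarith
    have hy'b : ‖y'‖ ≤ ‖y₀‖ + 1 := by
      have h1 : dist y' y₀ < 1 := Metric.mem_ball.mp hy'
      have h2 : ‖y'‖ - ‖y₀‖ ≤ ‖y' - y₀‖ := norm_sub_norm_le y' y₀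
      rw [dist_eq_norm] at h1; linarith
    have ha : ‖x - y‖ ≤ C := by
      have := norm_sub_le x y
      have := hR x hx
      simp only [hC]; linarith
    have hb : ‖x - y'‖ ≤ C := by
      have := norm_sub_le x y'
      have := hR x hx
      simp only [hC]; linarith
    have habs : |‖x - y‖ - ‖x - y'‖| ≤ dist y y' := by
      have h1 : |‖x - y‖ - ‖x - y'‖| ≤ ‖(x - y) - (x - y')‖ := abs_norm_sub_norm_le _ _
      have h2 : (x - y) - (x - y') = y' - y := by abel
      rw [h2] at h1
      rw [dist_comm, dist_eq_norm]
      exact h1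
    have hdd : 0 ≤ dist y y' := dist_nonneg
    have h2 : ‖x - y‖ ^ 2 ≤ ‖x - y'‖ ^ 2 + 2 * C * dist y y' := by
      rcases abs_le.mp habs with ⟨h3, h4⟩
      nlinarith [norm_nonneg (x - y), norm_nonneg (x - y')]
    unfold cost
    rw [div_add' _ _ _ (by positivity : (2:ℝ) * τ ≠ 0)]
    rw [div_le_div_iff_of_pos_right (by positivity : (0:ℝ) < 2 * τ)]
    have hexp : C / τ * dist y y' * (2 * τ) = 2 * C * dist y y' := by
      field_simp
    rw [hexp]
    linarith [h2]
  have hkey : ∀ y ∈ Metric.ball y₀ 1, ∀ y' ∈ Metric.ball y₀ 1,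
      ctrans τ S f y ≤ ctrans τ S f y' + (C / τ) * dist y y' := by
    intro y hy y' hy'
    have h1 : ∀ x : S, ctrans τ S f y - (C / τ) * dist y y' ≤ f x.1 + cost τ x.1 y' := by
      intro x
      have h2 : ctrans τ S f y ≤ f x.1 + cost τ x.1 y := ciInf_le (hbdd y) x
      have h3 := hcost x.1 x.2 y hy y' hy'
      linarith
    have h4 := le_ciInf h1
    have : (⨅ x : S, (f x.1 + cost τ x.1 y')) = ctrans τ S f y' := rfl
    rw [this] at h4
    linarith
  have hlip : LipschitzOnWith (C / τ).toNNReal (ctrans τ S f) (Metric.ball y₀ 1) := by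
    apply LipschitzOnWith.of_dist_le_mul
    intro y hy y' hy'
    rw [Real.coe_toNNReal _ hKpos.le, Real.dist_eq, abs_sub_le_iff]
    constructor
    · have := hkey y hy y' hy'; linarith
    · have := hkey y' hy' y hy; rw [dist_comm] at this; linarith
  exact (hlip.continuousOn).continuousAt (Metric.ball_mem_nhds y₀ one_pos)

set_option maxHeartbeats 1000000 in
/-- Near-minimizers of the `c`-transform infimum concentrate near `y - τ∇p^c(y)`. -/
lemma exists_near_argmin {d : ℕ} (τ : ℝ) (hτ : 0 < τ) (Ω : Set (Ed d)) (hne : Ω.Nonempty)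
    (p : Ed d → ℝ) (m : ℝ) (hm : ∀ x ∈ Ω, m ≤ p x) (y : Ed d)
    (hdiff : DifferentiableAt ℝ (ctrans τ Ω p) y) (η : ℝ) (hη : 0 < η) :
    ∃ x ∈ Ω, ‖x - (y - τ • gradient (ctrans τ Ω p) y)‖ ≤ η ∧
      p x + cost τ x y < ctrans τ Ω p y + η := by
  haveI : Nonempty Ω := hne.to_subtype
  set q : Ed d → ℝ := ctrans τ Ω p with hqdef
  set g : Ed d := gradient q y with hgdef
  have hcost0 : ∀ (a b : Ed d), 0 ≤ cost τ a b := by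
    intro a b; unfold cost; positivity
  have hbdd : ∀ y', BddBelow (Set.range fun x : Ω => p x.1 + cost τ x.1 y') := by
    intro y'
    refine ⟨m, ?_⟩
    rintro v ⟨x, rfl⟩
    have h1 := hm x.1 x.2
    have h2 := hcost0 x.1 y'
    show m ≤ p x.1 + cost τ x.1 y'
    linarith
  have hgrad : ∀ v : Ed d, (inner ℝ g v : ℝ) = fderiv ℝ q y v := by
    intro v
    exact InnerProductSpace.toDual_symm_apply
  set η₁ : ℝ := η / τ with hη₁def
  have hη₁ : 0 < η₁ := by positivity
  have hlo := hasFDerivAt_iff_isLittleO_nhds_zero.mp hdiff.hasFDerivAt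
  have hc := (Asymptotics.isLittleO_iff.mp hlo) (show (0:ℝ) < η₁/4 by positivity)
  obtain ⟨δ, hδpos, hδ⟩ := Metric.eventually_nhds_iff.mp hc
  set t : ℝ := min (δ/2) (τ*η₁/2) with htdef
  have ht : 0 < t := by
    apply lt_min (by positivity) (by positivity)
  have htδ : t < δ := lt_of_le_of_lt (min_le_left _ _) (by linarith)
  have htτ : t ≤ τ*η₁/2 := min_le_right _ _
  set ε : ℝ := min (t*η₁/4) η with hεdef
  have hε : 0 < ε := lt_min (by positivity) hη
  have hεt : ε ≤ t*η₁/4 := min_le_left _ _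
  have hεη : ε ≤ η := min_le_right _ _
  clear_value t ε
  have hQlt : (⨅ x : Ω, (p x.1 + cost τ x.1 y)) < q y + ε := by
    have : q y < q y + ε := lt_add_of_pos_right _ hε
    exact this
  obtain ⟨⟨x, hxΩ⟩, hx⟩ := exists_lt_of_ciInf_lt hQlt
  simp only at hx
  refine ⟨x, hxΩ, ?_, lt_of_lt_of_le hx (by linarith)⟩
  set u : Ed d := g + τ⁻¹ • (x - y) with hudef
  have hxy : x - (y - τ • g) = τ • u := by
    rw [hudef, smul_add, smul_smul, mul_inv_cancel₀ hτ.ne', one_smul]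
    abel
  have hnorm : ‖x - (y - τ • g)‖ = τ * ‖u‖ := by
    rw [hxy, norm_smul, Real.norm_eq_abs, abs_of_pos hτ]
  rw [hnorm]
  by_cases hu0 : u = 0
  · rw [hu0, norm_zero, mul_zero]; exact hη.le
  have hun : 0 < ‖u‖ := norm_pos_iff.mpr hu0
  -- test direction
  set h : Ed d := (t/‖u‖) • u with hhdef
  have hhn : ‖h‖ = t := by
    rw [hhdef, norm_smul, Real.norm_eq_abs, abs_of_pos (by positivity : (0:ℝ) < t/‖u‖)]
    field_simp
  have h1 : q (y + h) ≤ p x + cost τ x (y + h) := ciInf_le (hbdd (y+h)) (⟨x, hxΩ⟩ : Ω)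
  have h3 : |q (y + h) - q y - fderiv ℝ q y h| ≤ (η₁/4) * ‖h‖ := by
    have hdist : dist h 0 < δ := by
      rw [dist_zero_right, hhn]; exact htδ
    have := hδ hdist
    simpa [Real.norm_eq_abs] using this
  have hcost : cost τ x (y + h) = cost τ x y - τ⁻¹ * (inner ℝ (x - y) h : ℝ) + (2*τ)⁻¹ * ‖h‖^2 := by
    have harg : x - (y + h) = (x - y) - h := by abel
    unfold cost
    rw [harg, norm_sub_sq_real]
    field_simp
  have h5 : (inner ℝ u h : ℝ) = t * ‖u‖ := by
    rw [hhdef, real_inner_smul_right, real_inner_self_eq_norm_sq]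
    field_simp
  have h6 : (inner ℝ u h : ℝ) = fderiv ℝ q y h + τ⁻¹ * (inner ℝ (x - y) h : ℝ) := by
    rw [hudef, inner_add_left, real_inner_smul_left, hgrad]
  have hfinal : t * ‖u‖ ≤ t^2/(2*τ) + ε + (η₁/4)*t := by
    have ha := (abs_le.mp h3).1
    -- fderiv h ≤ q (y+h) - q y + (η₁/4) t
    have hb : fderiv ℝ q y h ≤ q (y + h) - q y + (η₁/4) * t := by
      rw [hhn] at ha; linarith
    have hcst : q (y + h) - q y < - τ⁻¹ * (inner ℝ (x - y) h : ℝ) + (2*τ)⁻¹ * t^2 + ε := by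
      have := h1
      rw [hcost, hhn] at this
      linarith
    have h8 : t * ‖u‖ = fderiv ℝ q y h + τ⁻¹ * (inner ℝ (x - y) h : ℝ) := h5.symm.trans h6
    have h9 : (2*τ)⁻¹ * t^2 = t^2/(2*τ) := by field_simp
    linarith [hb, hcst, h8, h9]
  -- conclude ‖u‖ ≤ η₁, hence τ‖u‖ ≤ η
  have huη : ‖u‖ ≤ η₁ := by
    by_contra hcon
    push_neg at hcon
    have hsq : t^2/(2*τ) ≤ t*η₁/4 := by
      rw [div_le_iff₀ (by positivity : (0:ℝ) < 2*τ)]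
      nlinarith [htτ, ht]
    have : t * η₁ < t * ‖u‖ := by
      exact mul_lt_mul_of_pos_left hcon ht
    nlinarith [mul_pos ht hη₁]
  calc τ * ‖u‖ ≤ τ * η₁ := mul_le_mul_of_nonneg_left huη hτ.le
  _ = η := by rw [hη₁def]; field_simp

/-- The set defining `s*` is bounded above, by superlinearity. -/
lemma sstar_bddAbove {s : ℝ → ℝ≥0∞} (hs : EnergyDensity s) (b : ℝ) :
    BddAbove ((fun y => b * y - (s y).toReal) '' {y : ℝ | s y ≠ ⊤}) := by
  have hev : ∀ᶠ z : ℝ in atTop, ENNReal.ofReal (|b| + 1) < s z / ENNReal.ofReal z :=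
    hs.superlinear.eventually (lt_mem_nhds ENNReal.ofReal_lt_top)
  obtain ⟨M₀, hM₀⟩ := eventually_atTop.mp hev
  set M : ℝ := max M₀ 1 with hMdef
  refine ⟨|b| * M, ?_⟩
  rintro v ⟨y, hy, rfl⟩
  simp only [Set.mem_setOf_eq] at hy
  have hy0 : 0 ≤ y := by
    by_contra hneg; push_neg at hneg
    exact hy (hs.eq_top_of_neg y hneg)
  have hM1 : (1:ℝ) ≤ M := le_max_right _ _
  rcases le_or_gt y M with hyM | hyM
  · have h1 : b * y ≤ |b| * M := by
      calc b * y ≤ |b * y| := le_abs_self _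
      _ = |b| * |y| := abs_mul _ _
      _ = |b| * y := by rw [abs_of_nonneg hy0]
      _ ≤ |b| * M := mul_le_mul_of_nonneg_left hyM (abs_nonneg b)
    have h2 : 0 ≤ (s y).toReal := ENNReal.toReal_nonneg
    simp only
    linarith
  · have hy1 : (1:ℝ) < y := lt_of_le_of_lt hM1 hyM
    have hy0' : (0:ℝ) < y := by linarith
    have h1 := hM₀ y (le_of_lt (lt_of_le_of_lt (le_max_left _ _) hyM))
    rw [ENNReal.lt_div_iff_mul_lt (Or.inl (by simp [ENNReal.ofReal_eq_zero]; linarith))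
      (Or.inl ENNReal.ofReal_ne_top)] at h1
    have h2 : ENNReal.ofReal ((|b| + 1) * y) ≤ s y := by
      rw [ENNReal.ofReal_mul (by positivity)]
      exact h1.le
    have h3 : (|b| + 1) * y ≤ (s y).toReal := by
      rw [← ENNReal.ofReal_le_iff_le_toReal hy]
      exact h2
    simp only
    nlinarith [le_abs_self b, abs_nonneg b,
      mul_nonneg (abs_nonneg b) (le_trans zero_le_one hM1)]

/-- `s* ≥ 0` always. -/
lemma sstar_nonneg {s : ℝ → ℝ≥0∞} (hs : EnergyDensity s) (b : ℝ) : 0 ≤ sstar s b := by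
  have h0 : (0:ℝ) ∈ (fun y => b * y - (s y).toReal) '' {y : ℝ | s y ≠ ⊤} := by
    refine ⟨0, ?_, by simp [hs.zero]⟩
    simp [hs.zero]
  exact le_csSup (sstar_bddAbove hs b) h0

/-- If `b ∈ ∂s(z)` with `z > 0` then `b ≥ 0`. -/
lemma nonneg_of_inSubdiff {s : ℝ → ℝ≥0∞} (hs : EnergyDensity s) {z b : ℝ}
    (h : inSubdiff s z b) (hz : 0 < z) : 0 ≤ b := by
  have h1 := h.2
  have h2 : 0 ≤ (s z).toReal := ENNReal.toReal_nonneg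
  have h3 := sstar_nonneg hs b
  nlinarith

/-- (good_data) forces `s` to be finite somewhere on `(0,∞)`. -/
lemma exists_pos_finite {d : ℕ} {s : ℝ → ℝ≥0∞} (hs : EnergyDensity s) {Ω : Set (Ed d)}
    {ρn : Ed d → ℝ} (hgd : GoodData s Ω ρn) : ∃ z0, 0 < z0 ∧ s z0 ≠ ⊤ := by
  by_contra hno; push_neg at hno
  have hdom : {y : ℝ | s y ≠ ⊤} = {0} := by
    ext y
    simp only [Set.mem_setOf_eq, Set.mem_singleton_iff]
    constructor
    · intro hy
      rcases lt_trichotomy y 0 with h1 | h1 | h1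
      · exact absurd (hs.eq_top_of_neg y h1) hy
      · exact h1
      · exact absurd (hno y h1) hy
    · rintro rfl
      rw [hs.zero]
      exact ENNReal.zero_ne_top
  have hsstar : ∀ b, sstar s b = 0 := by
    intro b
    unfold sstar
    rw [hdom, Set.image_singleton]
    simp [hs.zero]
  have hsub : ∀ b, subStar s b = {0} := by
    intro b
    ext z
    simp only [subStar, Set.mem_setOf_eq, hsstar, Set.mem_singleton_iff, zero_add]
    constructor
    · intro hz
      have h1 := hz (b + 1)
      have h2 := hz (b - 1)
      have h1' : z ≤ 0 := by nlinarith
      have h2' : 0 ≤ z := by nlinarith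
      linarith
    · rintro rfl w
      simp
  have hlim : liminf (fun b : ℝ => ((sInf (subStar s b) : ℝ) : EReal)) atTop = ((0:ℝ) : EReal) := by
    have heq : (fun b : ℝ => ((sInf (subStar s b) : ℝ) : EReal)) = fun _ => ((0:ℝ) : EReal) := by
      funext b
      rw [hsub b, csInf_singleton]
    rw [heq, liminf_const]
  have h2 := hgd.2.2
  rw [hlim] at h2
  have h3 : (∫ x in Ω, ρn x) / (volume Ω).toReal < 0 := by exact_mod_cast h2
  linarith [hgd.2.1]

/-- If `s*(b) = 0` and `s` is finite somewhere on `(0,∞)`, then `b ≤ 0`. -/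
lemma le_zero_of_sstar_eq_zero {s : ℝ → ℝ≥0∞} (hs : EnergyDensity s)
    (hdom : ∃ z0, 0 < z0 ∧ s z0 ≠ ⊤) {b : ℝ} (hb : sstar s b = 0) : b ≤ 0 := by
  by_contra hpos; push_neg at hpos
  obtain ⟨z0, hz0, hz0fin⟩ := hdom
  have hev1 : ∀ᶠ z in 𝓝[>] (0:ℝ), (s z).toReal / z < b :=
    hs.slope_zero.eventually_lt_const hpos
  have hev2 : ∀ᶠ z in 𝓝[>] (0:ℝ), z ∈ Set.Ioo (0:ℝ) z0 :=
    Filter.eventually_mem_set.mpr (Ioo_mem_nhdsGT_of_mem ⟨le_refl (0:ℝ), hz0⟩)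
  obtain ⟨z, hz1, hzpos, hzlt⟩ := (hev1.and hev2).exists
  have hfin : s z ≠ ⊤ := by
    have ht : z / z0 ∈ Set.Icc (0:ℝ) 1 :=
      ⟨by positivity, by rw [div_le_one hz0]; exact hzlt.le⟩
    have hc := hs.convex z0 0 (z/z0) ht
    have harg : z/z0 * z0 + (1 - z/z0) * 0 = z := by field_simp; ring
    rw [harg, hs.zero, mul_zero, add_zero] at hc
    intro htop
    rw [htop] at hc
    have hne : ENNReal.ofReal (z/z0) * s z0 ≠ ⊤ :=
      ENNReal.mul_ne_top ENNReal.ofReal_ne_top hz0fin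
    exact hne (top_le_iff.mp hc)
  have hval : (s z).toReal < b * z := by
    rw [div_lt_iff₀ hzpos] at hz1
    linarith [hz1]
  have hle : b * z - (s z).toReal ≤ sstar s b :=
    le_csSup (sstar_bddAbove hs b) ⟨z, hfin, rfl⟩
  rw [hb] at hle
  nlinarith [mul_pos hpos hzpos]

/-- A `withDensity` measure vanishes on any set where the density vanishes pointwise. -/
lemma withDensity_null_of_zero {α : Type*} [MeasurableSpace α] (μ : Measure α)
    (f : α → ℝ≥0∞) (S : Set α) (hS : ∀ x ∈ S, f x = 0) (hfin : μ S ≠ ⊤) :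
    μ.withDensity f S = 0 := by
  have hsub : S ⊆ toMeasurable μ S := subset_toMeasurable μ S
  have hle : μ.withDensity f S ≤ ∫⁻ x in toMeasurable μ S, f x ∂μ := by
    rw [← withDensity_apply f (measurableSet_toMeasurable μ S)]
    exact measure_mono hsub
  refine le_antisymm (le_trans hle (le_of_eq ?_)) zero_le
  rw [MeasureTheory.lintegral_def]
  refine le_antisymm (iSup₂_le fun g hg => ?_) zero_le
  have hgmeas : MeasurableSet {x | g x ≠ 0} := g.measurable (measurableSet_singleton 0).compl
  have h1 : (μ.restrict (toMeasurable μ S)) {x | g x ≠ 0}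
      = μ (toMeasurable μ S ∩ {x | g x ≠ 0}) := by
    rw [Measure.restrict_apply hgmeas, Set.inter_comm]
  have h2 := Measure.measure_toMeasurable_inter (μ := μ) (t := S) hgmeas hfin
  have h3 : S ∩ {x | g x ≠ 0} = ∅ := by
    ext x
    simp only [Set.mem_inter_iff, Set.mem_setOf_eq, Set.mem_empty_iff_false, iff_false, not_and,
      not_not]
    intro hxS
    exact le_antisymm (by rw [← hS x hxS]; exact hg x) zero_le
  have hae : (⇑g) =ᵐ[μ.restrict (toMeasurable μ S)] 0 := by
    rw [Filter.EventuallyEq, ae_iff]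
    simp only [Pi.zero_apply]
    rw [show {x | ¬ g x = 0} = {x | g x ≠ 0} from rfl, h1, h2, h3, measure_empty]
  have hcalc : g.lintegral (μ.restrict (toMeasurable μ S)) = 0 := by
    calc g.lintegral (μ.restrict (toMeasurable μ S))
        = ∫⁻ a, g a ∂(μ.restrict (toMeasurable μ S)) :=
          (SimpleFunc.lintegral_eq_lintegral g _).symm
      _ = ∫⁻ _, (0:ℝ≥0∞) ∂(μ.restrict (toMeasurable μ S)) := lintegral_congr_ae hae
      _ = 0 := lintegral_zero
  exact le_of_eq hcalc

end AuxLemmas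

set_option maxHeartbeats 2000000 in
/-- the support of the density only expands. -/
theorem support_expands {d : ℕ} (τ : ℝ) (hτ : 0 < τ)
    (Ω : Set (Ed d)) (hΩo : IsOpen Ω) (hΩc : Convex ℝ Ω) (hΩb : Bornology.IsBounded Ω)
    (s : ℝ → ℝ≥0∞) (hs : EnergyDensity s)
    (b₀ b₁ B : ℝ) (G : ℝ → Ed d → ℝ) (hG : GrowthFun d b₀ b₁ B G)
    (ρn ρn1 μn1 p : Ed d → ℝ) (hρn : memX s Ω ρn)
    (hρn_nonneg : ∀ᵐ x ∂(volume.restrict Ω), 0 ≤ ρn x)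
    (hgd : GoodData s Ω ρn)
    (hstep : OptimalStep τ Ω s G ρn ρn1 μn1 p) :
    volume {x : Ed d | x ∈ Ω ∧ 0 < ρn x ∧ ρn1 x = 0} = 0 := by
  classical
  have hΩm : MeasurableSet Ω := hΩo.measurableSet
  set μ : Measure (Ed d) := volume.restrict Ω with hμdef
  -- volume facts
  have havg := hgd.2.1
  have hvolΩ : 0 < (volume Ω).toReal := by
    by_contra hv
    push_neg at hv
    have h0 : (volume Ω).toReal = 0 := le_antisymm hv ENNReal.toReal_nonneg
    rw [h0, div_zero] at havg
    exact lt_irrefl _ havg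
  have hΩfin : volume Ω ≠ ⊤ := by
    rcases ENNReal.toReal_pos_iff.mp hvolΩ with ⟨_, h2⟩
    exact h2.ne
  have hΩne : Ω.Nonempty := by
    rcases Set.eq_empty_or_nonempty Ω with h | h
    · rw [h] at hvolΩ; simp at hvolΩ
    · exact h
  haveI : Nonempty Ω := hΩne.to_subtype
  obtain ⟨R, hR⟩ : ∃ R, ∀ x ∈ Ω, ‖x‖ ≤ R := (isBounded_iff_forall_norm_le).mp hΩb
  have hcost0 : ∀ (a b : Ed d), 0 ≤ cost τ a b := by
    intro a b; unfold cost; positivity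
  -- p is bounded below on Ω
  have hbb : ∃ m, ∀ x ∈ Ω, m ≤ p x := by
    by_contra hnb
    push_neg at hnb
    have hq0 : ∀ y, ctrans τ Ω p y = 0 := by
      intro y
      apply Real.iInf_of_not_bddBelow
      rintro ⟨m, hm⟩
      obtain ⟨x, hxΩ, hx⟩ := hnb (m - (R + ‖y‖)^2/(2*τ))
      have hcb : cost τ x y ≤ (R + ‖y‖)^2/(2*τ) := by
        unfold cost
        have h1 : ‖x - y‖ ≤ R + ‖y‖ := le_trans (norm_sub_le x y) (by linarith [hR x hxΩ])
        have h2 : ‖x - y‖^2 ≤ (R + ‖y‖)^2 := by nlinarith [norm_nonneg (x - y)]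
        exact (div_le_div_iff_of_pos_right (by positivity : (0:ℝ) < 2*τ)).mpr h2
      have hmem := hm (Set.mem_range_self (⟨x, hxΩ⟩ : Ω))
      simp only at hmem
      linarith
    have hp0 : ∀ x ∈ Ω, p x = 0 := by
      intro x hxΩ
      have hcc := hstep.cconcave x hxΩ
      rw [← hcc]
      unfold cbar
      have h1 : ∀ y : Ω, ctrans τ Ω p y.1 - cost τ x y.1 = -cost τ x y.1 := by
        intro y; rw [hq0]; ring
      rw [iSup_congr h1]
      apply le_antisymm
      · exact ciSup_le (fun y => neg_nonpos.mpr (hcost0 x y.1))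
      · have h2 : -cost τ x x = 0 := by unfold cost; simp
        calc (0:ℝ) = -cost τ x x := h2.symm
        _ ≤ ⨆ y : Ω, -cost τ x y.1 := le_ciSup
          (⟨0, by rintro v ⟨y, rfl⟩; exact neg_nonpos.mpr (hcost0 x y.1)⟩ :
            BddAbove (Set.range fun y : Ω => -cost τ x y.1)) (⟨x, hxΩ⟩ : Ω)
    obtain ⟨x, hxΩ, hx⟩ := hnb (-1)
    rw [hp0 x hxΩ] at hx
    linarith
  obtain ⟨m, hm⟩ := hbb
  set q : Ed d → ℝ := ctrans τ Ω p with hqdef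
  have hbddq : ∀ y', BddBelow (Set.range fun x : Ω => p x.1 + cost τ x.1 y') := by
    intro y'
    refine ⟨m, ?_⟩
    rintro v ⟨x, rfl⟩
    have h1 := hm x.1 x.2
    have h2 := hcost0 x.1 y'
    show m ≤ p x.1 + cost τ x.1 y'
    linarith
  have hq_cont : Continuous q := continuous_ctrans τ hτ Ω hΩne R hR p m hm
  have hq_le : ∀ x ∈ Ω, q x ≤ p x := by
    intro x hx
    have h1 : q x ≤ p x + cost τ x x := ciInf_le (hbddq x) (⟨x, hx⟩ : Ω)
    have h2 : cost τ x x = 0 := by unfold cost; simp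
    linarith
  -- continuity of p on Ω
  obtain ⟨x₀, hx₀⟩ := hΩne
  have hqub : ∀ y ∈ Ω, q y ≤ p x₀ + (‖x₀‖ + R)^2/(2*τ) := by
    intro y hy
    have h1 : q y ≤ p x₀ + cost τ x₀ y := ciInf_le (hbddq y) (⟨x₀, hx₀⟩ : Ω)
    have h2 : cost τ x₀ y ≤ (‖x₀‖ + R)^2/(2*τ) := by
      unfold cost
      have h3 : ‖x₀ - y‖ ≤ ‖x₀‖ + R := le_trans (norm_sub_le x₀ y) (by linarith [hR y hy])
      have h4 : ‖x₀ - y‖^2 ≤ (‖x₀‖ + R)^2 := by nlinarith [norm_nonneg (x₀ - y)]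
      exact (div_le_div_iff_of_pos_right (by positivity : (0:ℝ) < 2*τ)).mpr h4
    linarith
  have hp_cont : ContinuousOn p Ω := by
    have hPc : Continuous (ctrans τ Ω (fun z => -q z)) :=
      continuous_ctrans τ hτ Ω ⟨x₀, hx₀⟩ R hR _ (-(p x₀ + (‖x₀‖ + R)^2/(2*τ)))
        (fun y hy => by have := hqub y hy; linarith)
    have heq : Set.EqOn p (fun x => -(ctrans τ Ω (fun z => -q z) x)) Ω := by
      intro x hx
      have hcc := hstep.cconcave x hx
      rw [← hcc]
      show cbar τ Ω q x = -(ctrans τ Ω (fun z => -q z) x)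
      unfold cbar ctrans
      rw [real_iSup_eq_neg_iInf (fun y : Ω => q y.1 - cost τ x y.1)]
      congr 1
      apply iInf_congr
      intro y
      have hcs : cost τ x y.1 = cost τ y.1 x := by unfold cost; rw [norm_sub_rev]
      rw [hcs]; ring
    exact (hPc.neg.continuousOn).congr heq
  -- the open negativity set
  set U : Set (Ed d) := Ω ∩ p ⁻¹' (Set.Iio 0) with hUdef
  have hUopen : IsOpen U := hp_cont.isOpen_inter_preimage hΩo isOpen_Iio
  set N : Set (Ed d) := Ωᶜ ∪ U with hNdef
  have hNmeas : MeasurableSet N := hΩm.compl.union hUopen.measurableSet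
  set ν : Measure (Ed d) := dmeas Ω ρn1 with hνdef
  have hdom := exists_pos_finite hs hgd
  have hνN : ν N = 0 := by
    have h1 : ν Ωᶜ = 0 := by
      have h2 : μ Ωᶜ = 0 := by
        rw [hμdef, Measure.restrict_apply hΩm.compl]
        simp
      exact withDensity_absolutelyContinuous μ _ h2
    have h2 : ν U = 0 := by
      show (μ.withDensity fun x => ENNReal.ofReal (ρn1 x)) U = 0
      rw [withDensity_apply _ hUopen.measurableSet]
      have h3 : ∀ᵐ x ∂μ.restrict U, inSubdiff s (ρn1 x) (p x) :=
        ae_restrict_of_ae hstep.subdiff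
      have h4 : ∀ᵐ x ∂μ.restrict U, x ∈ U := ae_restrict_mem hUopen.measurableSet
      have hae : (fun x => ENNReal.ofReal (ρn1 x)) =ᵐ[μ.restrict U] (fun _ => 0) := by
        filter_upwards [h3, h4] with x hx hxU
        have hple : p x < 0 := hxU.2
        have hρle : ρn1 x ≤ 0 := by
          by_contra hpos
          push_neg at hpos
          have := nonneg_of_inSubdiff hs hx hpos
          linarith
        simp [ENNReal.ofReal_eq_zero.mpr hρle]
      rw [lintegral_congr_ae hae, lintegral_zero]
    have hle : ν N ≤ 0 := by
      calc ν N ≤ ν Ωᶜ + ν U := measure_union_le _ _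
      _ = 0 := by rw [h1, h2, add_zero]
    exact le_antisymm hle zero_le
  -- pushforward data
  obtain ⟨T, hTmeas, hTform, hTpush, hTinv⟩ := hstep.pushforward
  -- measurable representative of the pre-transport density
  have hρsm : AEStronglyMeasurable ρn μ := hρn.1.aestronglyMeasurable
  set ρm : Ed d → ℝ := hρsm.mk ρn with hρmdef
  have hρmeas : StronglyMeasurable ρm := hρsm.stronglyMeasurable_mk
  have hρae : ρn =ᵐ[μ] ρm := hρsm.ae_eq_mk
  have hGcont : Continuous fun x : Ed d => G (q x) x := by
    obtain ⟨L, hL⟩ := hG.lipschitz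
    exact hL.continuous.comp (hq_cont.prodMk continuous_id)
  set σm : Ed d → ℝ := fun x => ρm x * (1 + τ * G (q x) x) with hσmdef
  set g0 : Ed d → ℝ≥0∞ := fun x => ENNReal.ofReal (σm x) with hg0def
  have hg0meas : Measurable g0 := by
    apply ENNReal.measurable_ofReal.comp
    exact hρmeas.measurable.mul
      ((continuous_const.add (continuous_const.mul hGcont)).measurable)
  have hμt : dmeas Ω (fun x => ρn x + τ * μn1 x) = μ.withDensity g0 := by
    show μ.withDensity _ = _
    apply withDensity_congr_ae
    filter_upwards [hstep.growth, hρae] with x hgr hρ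
    have hx1 : ρn x + τ * μn1 x = σm x := by
      rw [hgr, hσmdef]
      simp only
      rw [← hρ]
      ring
    rw [hx1]
  set μt : Measure (Ed d) := μ.withDensity g0 with hμtdef
  have hmap : Measure.map T μt = ν := by rw [← hμt]; exact hTpush
  have hTN : μt (T ⁻¹' N) = 0 := by
    rw [← Measure.map_apply hTmeas hNmeas, hmap, hνN]
  -- full-measure good set
  have hae_all : ∀ᵐ x ∂μ, inSubdiff s (ρn1 x) (p x) ∧ μn1 x = ρn x * G (q x) x ∧
      T x = x - τ • gradient q x ∧ ρn x = ρm x := by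
    filter_upwards [hstep.subdiff, hstep.growth, hTform, hρae] with x h1 h2 h3 h4
    exact ⟨h1, h2, h3, h4⟩
  set Z : Set (Ed d) := {x | ¬(inSubdiff s (ρn1 x) (p x) ∧ μn1 x = ρn x * G (q x) x ∧
      T x = x - τ • gradient q x ∧ ρn x = ρm x)} with hZdef
  have hZ : μ Z = 0 := hae_all
  set A : Set (Ed d) := {x : Ed d | x ∈ Ω ∧ 0 < ρn x ∧ ρn1 x = 0} with hAdef
  by_contra hA
  have hAΩ : A ⊆ Ω := fun x hx => hx.1
  have hμA : μ A = volume A := by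
    rw [hμdef, Measure.restrict_apply' hΩm, Set.inter_eq_left.mpr hAΩ]
  set A₃ : Set (Ed d) := A \ Z with hA₃def
  have hμA₃ : μ A₃ = volume A := by rw [hA₃def, measure_diff_null hZ, hμA]
  -- pointwise facts on A₃
  have hA₃fact : ∀ x ∈ A₃, p x ≤ 0 ∧ 0 < σm x ∧ T x = x - τ • gradient q x := by
    rintro x ⟨⟨hxΩ, hρpos, hρ1⟩, hxZ⟩
    have hxZ' := not_not.mp hxZ
    obtain ⟨hsub, hgr, hTf, hρm'⟩ := hxZ'
    have hp0 : p x ≤ 0 := by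
      rw [hρ1] at hsub
      have hst : sstar s (p x) = 0 := by
        have h1 := hsub.2
        rw [hs.zero] at h1
        simpa using h1.symm
      exact le_zero_of_sstar_eq_zero hs hdom hst
    have hq0 : q x ≤ 0 := le_trans (hq_le x hxΩ) hp0
    have hGpos : 0 < G (q x) x := lt_of_lt_of_le (hG.pos_at_zero x) (hG.anti x hq0)
    have hσ : 0 < σm x := by
      rw [hσmdef]
      simp only
      rw [← hρm']
      have h2 : (0:ℝ) < 1 + τ * G (q x) x := by nlinarith
      exact mul_pos hρpos h2
    exact ⟨hp0, hσ, hTf⟩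
  -- A₃ is covered by T⁻¹N and the fixed-point set
  set F : Set (Ed d) := {x | x ∈ A₃ ∧ T x = x} with hFdef
  have hincl : A₃ ⊆ T ⁻¹' N ∪ F := by
    intro x hx
    have hxcopy := hx
    obtain ⟨hp0, hσ, hTf⟩ := hA₃fact x hx
    obtain ⟨⟨hxΩ, hρpos, hρ1⟩, _⟩ := hxcopy
    by_cases hg : gradient q x = 0
    · right
      exact ⟨hx, by rw [hTf, hg, smul_zero, sub_zero]⟩
    · left
      have hdiff : DifferentiableAt ℝ q x := by
        by_contra hnd
        apply hg
        show (InnerProductSpace.toDual ℝ (Ed d)).symm (fderiv ℝ q x) = 0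
        rw [fderiv_zero_of_not_differentiableAt hnd]
        simp
      set Ty : Ed d := x - τ • gradient q x with hTydef
      have hTyne : Ty ≠ x := by
        intro hcon
        apply hg
        have h1 : τ • gradient q x = 0 := by
          rwa [hTydef, sub_eq_self] at hcon
        rcases smul_eq_zero.mp h1 with h2 | h2
        · exact absurd h2 hτ.ne'
        · exact h2
      show T x ∈ N
      rw [hTf]
      by_cases hTyΩ : Ty ∈ Ω
      · right
        refine ⟨hTyΩ, ?_⟩
        have hclaim : p Ty + cost τ Ty x ≤ q x := by
          by_contra hcl
          push_neg at hcl
          set θ : ℝ := (p Ty + cost τ Ty x - q x)/2 with hθdef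
          have hθpos : 0 < θ := by rw [hθdef]; linarith
          have hcw : ContinuousWithinAt (fun z => p z + cost τ z x) Ω Ty := by
            apply ContinuousWithinAt.add
            · exact hp_cont Ty hTyΩ
            · apply Continuous.continuousWithinAt
              unfold cost
              have : Continuous fun z : Ed d => ‖z - x‖^2 := by
                apply Continuous.pow
                exact (continuous_id.sub continuous_const).norm
              exact this.div_const _
          have hlim : q x + θ < p Ty + cost τ Ty x := by rw [hθdef]; linarith
          have hev : ∀ᶠ z in 𝓝[Ω] Ty, q x + θ < p z + cost τ z x :=
            hcw.eventually (lt_mem_nhds hlim)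
          obtain ⟨δ, hδpos, hδ⟩ := Metric.mem_nhdsWithin_iff.mp hev
          have hηpos : 0 < min (δ/2) θ := lt_min (by positivity) hθpos
          obtain ⟨x', hx'Ω, hx'near, hx'val⟩ :=
            exists_near_argmin τ hτ Ω ⟨x₀, hx₀⟩ p m hm x hdiff (min (δ/2) θ) hηpos
          have hx'ball : x' ∈ Metric.ball Ty δ := by
            rw [Metric.mem_ball, dist_eq_norm]
            calc ‖x' - Ty‖ = ‖x' - (x - τ • gradient q x)‖ := by rw [hTydef]
            _ ≤ min (δ/2) θ := hx'near
            _ ≤ δ/2 := min_le_left _ _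
            _ < δ := by linarith
          have h1 := hδ ⟨hx'ball, hx'Ω⟩
          simp only [Set.mem_setOf_eq] at h1
          have h2 : p x' + cost τ x' x < q x + θ :=
            lt_of_lt_of_le hx'val (by linarith [min_le_right (δ/2) θ])
          linarith
        have hcostpos : 0 < cost τ Ty x := by
          unfold cost
          apply div_pos _ (by positivity)
          exact pow_pos (norm_pos_iff.mpr (sub_ne_zero.mpr hTyne)) 2
        have hqx : q x ≤ p x := hq_le x hxΩ
        show Ty ∈ p ⁻¹' (Set.Iio 0)
        simp only [Set.mem_preimage, Set.mem_Iio]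
        linarith
      · left
        exact hTyΩ
  -- ν vanishes on F, hence μt too
  have hμuniv : μ Set.univ < ⊤ := by
    rw [hμdef, Measure.restrict_apply_univ]
    exact lt_top_iff_ne_top.mpr hΩfin
  have hνF : ν F = 0 := by
    show (μ.withDensity fun x => ENNReal.ofReal (ρn1 x)) F = 0
    apply withDensity_null_of_zero
    · intro x hx
      have : ρn1 x = 0 := hx.1.1.2.2
      simp [this]
    · exact (lt_of_le_of_lt (measure_mono (Set.subset_univ F)) hμuniv).ne
  have hμtF : μt F = 0 := by
    have hB := measurableSet_toMeasurable ν F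
    have h1 : μt (T ⁻¹' toMeasurable ν F) = 0 := by
      rw [← Measure.map_apply hTmeas hB, hmap, measure_toMeasurable, hνF]
    apply measure_mono_null _ h1
    intro x hx
    show T x ∈ toMeasurable ν F
    rw [hx.2]
    exact subset_toMeasurable ν F hx
  have hμtA₃ : μt A₃ = 0 := by
    have h1 : μt A₃ ≤ μt (T ⁻¹' N ∪ F) := measure_mono hincl
    have h2 : μt (T ⁻¹' N ∪ F) ≤ μt (T ⁻¹' N) + μt F := measure_union_le _ _
    rw [hTN, hμtF, add_zero] at h2
    exact le_antisymm (le_trans h1 h2) zero_le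
  -- contradiction via the measurable density
  have hνt : μt (toMeasurable μt A₃) = 0 := by
    rw [measure_toMeasurable]; exact hμtA₃
  have hint : ∫⁻ x in toMeasurable μt A₃, g0 x ∂μ = 0 := by
    rw [← withDensity_apply _ (measurableSet_toMeasurable μt A₃)]
    exact hνt
  have hae0 : g0 =ᵐ[μ.restrict (toMeasurable μt A₃)] 0 :=
    (lintegral_eq_zero_iff hg0meas).mp hint
  have hg0ne : MeasurableSet {x | g0 x ≠ 0} := hg0meas (measurableSet_singleton 0).compl
  have hZero : μ (toMeasurable μt A₃ ∩ {x | g0 x ≠ 0}) = 0 := by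
    have h1 := hae0
    rw [Filter.EventuallyEq, ae_iff] at h1
    simp only [Pi.zero_apply] at h1
    rwa [Measure.restrict_apply hg0ne, Set.inter_comm] at h1
  have hsub3 : A₃ ⊆ toMeasurable μt A₃ ∩ {x | g0 x ≠ 0} := by
    intro x hx
    refine ⟨subset_toMeasurable _ _ hx, ?_⟩
    have h1 := (hA₃fact x hx).2.1
    simp only [Set.mem_setOf_eq, hg0def, ne_eq, ENNReal.ofReal_eq_zero, not_le]
    exact h1
  have hfin : μ A₃ = 0 := measure_mono_null hsub3 hZero
  rw [hμA₃] at hfin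
  exact hA hfin
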